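/- For every position (a,n), the clairvoyant value satisfies Ṽ(a,n) ≤ max(a/n, 1/2) + (1/2)·∫_{max((2a−n)/n, 0)}^{1} exp(−(1+t)·t·n + 2a·t) dt. -/

import Mathlib

open MeasureTheory ProbabilityTheory Real

/-- `X` is an i.i.d. sequence of fair coin flips taking values in `{0,1}`,
with probability `1/2` of heads (`= 1`). -/
def IsFairCoinSeq {Ω : Type*} [MeasurableSpace Ω] (μ : Measure Ω) (X : ℕ → Ω → ℝ) : Prop :=
  (∀ i, Measurable (X i)) ∧
  (∀ i ω, X i ω = 0 ∨ X i ω = 1) ∧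
  (∀ i, μ {ω | X i ω = 1} = 1/2) ∧
  iIndepFun X μ

/-- `headsProp X a n k ω` is the proportion of heads `R_k` after `k` further flips,
starting from position `(a,n)`: `a` heads out of `n` flips. -/
noncomputable def headsProp {Ω : Type*} (X : ℕ → Ω → ℝ) (a n k : ℕ) (ω : Ω) : ℝ :=
  ((a : ℝ) + ∑ i ∈ Finset.range k, X i ω) / ((n : ℝ) + k)

/-- The clairvoyant value `Ṽ(a,n) = E[sup_k R_k]`. -/
noncomputable def clairvoyantValue {Ω : Type*} [MeasurableSpace Ω] (μ : Measure Ω)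
    (X : ℕ → Ω → ℝ) (a n : ℕ) : ℝ :=
  ∫ ω, (⨆ k : ℕ, headsProp X a n k ω) ∂μ

/-!
Let `M = sup_k R_k` and `c = max (a/n, 1/2)`. As `M ≤ 1`, `Ṽ ≤ c + E[(M - c)⁺]` and
`E[(M - c)⁺] = ∫₀^{1-c} P(M > c + s) ds`. For `x ≥ 1/2`, `M > x` means that the walk
`S_k = X_1 + ⋯ + X_k` reaches the line `x k + (x n - a)`. With `λ = 4x - 2`, the function
`b ↦ exp (-λ b)` is superharmonic for the walk `b ↦ b + x - X` of the remaining distance to the line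
(this is `cosh t ≤ exp t²` for `t = 2x - 1`), so by induction on the horizon the line is reached
with probability at most `exp (-λ (x n - a))`. The substitution `t = 2(c + s) - 1` turns the
resulting integral into the one of the statement.
-/

open Set

lemma exp_add_exp_le_two_mul_exp (x b : ℝ) :
    exp (-(4 * x - 2) * (b + x - 1)) + exp (-(4 * x - 2) * (b + x)) ≤
      2 * exp (-(4 * x - 2) * b) := by
  set t := 2 * x - 1 with ht
  have hcosh : cosh t ≤ exp (t ^ 2) :=
    (cosh_le_exp_half_sq t).trans (exp_le_exp.2 (by nlinarith [sq_nonneg t]))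
  have h₁ : exp (-(4 * x - 2) * (b + x - 1)) = exp t * exp (-t ^ 2) * exp (-(4 * x - 2) * b) := by
    rw [← exp_add, ← exp_add, ht]; ring_nf
  have h₂ : exp (-(4 * x - 2) * (b + x)) = exp (-t) * exp (-t ^ 2) * exp (-(4 * x - 2) * b) := by
    rw [← exp_add, ← exp_add, ht]; ring_nf
  calc exp (-(4 * x - 2) * (b + x - 1)) + exp (-(4 * x - 2) * (b + x))
      = 2 * (cosh t * exp (-t ^ 2)) * exp (-(4 * x - 2) * b) := by rw [h₁, h₂, cosh_eq]; ring
    _ ≤ 2 * (exp (t ^ 2) * exp (-t ^ 2)) * exp (-(4 * x - 2) * b) := by gcongr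
    _ = 2 * exp (-(4 * x - 2) * b) := by rw [← exp_add, add_neg_cancel, exp_zero, mul_one]

lemma integral_le_add_integral_max_sub_zero {Ω : Type*} [MeasurableSpace Ω] {μ : Measure Ω}
    [IsProbabilityMeasure μ] {f : Ω → ℝ} (hf : Integrable f μ) (c : ℝ) :
    ∫ ω, f ω ∂μ ≤ c + ∫ ω, max (f ω - c) 0 ∂μ := by
  have hpos : Integrable (fun ω => max (f ω - c) 0) μ := (hf.sub (integrable_const c)).pos_part
  calc ∫ ω, f ω ∂μ ≤ ∫ ω, (c + max (f ω - c) 0) ∂μ :=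
        integral_mono hf ((integrable_const c).add hpos) fun ω => by
          linarith [le_max_left (f ω - c) 0]
    _ = c + ∫ ω, max (f ω - c) 0 ∂μ := by
        rw [integral_add (integrable_const c) hpos, integral_const, probReal_univ, one_smul]

lemma integral_le_setIntegral_of_measureReal_lt_le {Ω : Type*} [MeasurableSpace Ω] {μ : Measure Ω}
    [IsFiniteMeasure μ] {g : Ω → ℝ} {f : ℝ → ℝ} {L : ℝ} (hg : Measurable g) (hg₀ : ∀ ω, 0 ≤ g ω)
    (hgL : ∀ ω, g ω ≤ L) (hf : IntegrableOn f (Ioc 0 L))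
    (htail : ∀ s ∈ Ioc 0 L, μ.real {ω | s < g ω} ≤ f s) :
    ∫ ω, g ω ∂μ ≤ ∫ s in Ioc 0 L, f s := by
  have hgint : Integrable g μ :=
    .of_mem_Icc 0 L hg.aemeasurable (ae_of_all _ fun ω => ⟨hg₀ ω, hgL ω⟩)
  have htail_zero : ∀ s ∈ Ioi 0 \ Ioc 0 L, μ.real {ω | s < g ω} = 0 := by
    rintro s ⟨hs₀, hs⟩
    have hempty : {ω | s < g ω} = ∅ :=
      eq_empty_of_forall_notMem fun ω (hω : s < g ω) => hs ⟨hs₀, (hω.trans_le (hgL ω)).le⟩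
    rw [hempty, measureReal_empty]
  rw [hgint.integral_eq_integral_meas_lt (ae_of_all _ hg₀),
    setIntegral_eq_of_subset_of_forall_sdiff_eq_zero measurableSet_Ioi Ioc_subset_Ioi_self
      htail_zero]
  exact integral_mono_of_nonneg (ae_of_all _ fun _ => measureReal_nonneg) hf
    ((ae_restrict_iff' measurableSet_Ioc).2 (ae_of_all _ htail))

lemma integral_exp_threshold_eq (a n c : ℝ) (hc : c ≤ 1) :
    ∫ s in Ioc 0 (1 - c), exp (-(4 * (c + s) - 2) * ((c + s) * n - a)) =
      1 / 2 * ∫ t in (2 * c - 1)..1, exp (-((1 + t) * t * n) + 2 * a * t) := by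
  have hsubst : ∀ s, exp (-(4 * (c + s) - 2) * ((c + s) * n - a)) =
      (fun t => exp (-((1 + t) * t * n) + 2 * a * t)) (2 * s + (2 * c - 1)) := by
    intro s; congr 1; ring
  rw [← intervalIntegral.integral_of_le (by linarith), funext hsubst,
    intervalIntegral.integral_comp_mul_add (fun t => exp (-((1 + t) * t * n) + 2 * a * t))
      two_ne_zero, smul_eq_mul, show 2 * (1 - c) + (2 * c - 1) = 1 by ring]
  norm_num

lemma setOf_lt_max_sub_zero {α : Type*} {f : α → ℝ} {c s : ℝ} (hs : 0 < s) :
    {ω | s < max (f ω - c) 0} = {ω | c + s < f ω} := by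
  ext ω
  change s < max (f ω - c) 0 ↔ c + s < f ω
  rw [lt_max_iff, or_iff_left hs.not_gt, lt_sub_iff_add_lt']

section CoinWalk

variable {Ω : Type*} {X : ℕ → Ω → ℝ}

def crossingSet (X : ℕ → Ω → ℝ) (m N : ℕ) (x b : ℝ) : Set Ω :=
  {ω | ∃ k < N, x * k + b ≤ ∑ i ∈ Finset.range k, X (m + i) ω}

lemma crossingSet_mono (m : ℕ) (x b : ℝ) : Monotone (crossingSet X m · x b) :=
  fun _ _ hNM _ ⟨k, hk, hsum⟩ => ⟨k, hk.trans_le hNM, hsum⟩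

lemma crossingSet_succ_subset (hX01 : ∀ i ω, X i ω = 0 ∨ X i ω = 1) {m N : ℕ} {x b : ℝ}
    (hb : 0 < b) :
    crossingSet X m (N + 1) x b ⊆
      (X m ⁻¹' {1} ∩ crossingSet X (m + 1) N x (b + x - 1)) ∪
        (X m ⁻¹' {0} ∩ crossingSet X (m + 1) N x (b + x)) := by
  rintro ω ⟨_ | k, hk, hsum⟩
  · simp at hsum; linarith
  have hshift : ∑ i ∈ Finset.range (k + 1), X (m + i) ω =
      ∑ i ∈ Finset.range k, X (m + 1 + i) ω + X m ω := by
    rw [Finset.sum_range_succ']; simp only [add_zero, add_assoc, add_comm 1]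
  rw [hshift] at hsum
  push_cast at hsum
  rcases hX01 m ω with h | h
  · exact .inr ⟨h, k, by omega, by linarith⟩
  · exact .inl ⟨h, k, by omega, by linarith⟩

lemma measurableSet_crossingSet_succ (m N : ℕ) (x b : ℝ) :
    MeasurableSet[⨆ j ∈ Ioi m, MeasurableSpace.comap (X j) inferInstance]
      (crossingSet X (m + 1) N x b) := by
  have hmeas : ∀ i, Measurable[⨆ j ∈ Ioi m, MeasurableSpace.comap (X j) inferInstance]
      (X (m + 1 + i)) := fun i =>
    (comap_measurable (X (m + 1 + i))).mono
      (le_biSup (fun j => MeasurableSpace.comap (X j) inferInstance)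
        (show m + 1 + i ∈ Ioi m by simp; omega)) le_rfl
  have hunion : crossingSet X (m + 1) N x b =
      ⋃ k < N, {ω | x * k + b ≤ ∑ i ∈ Finset.range k, X (m + 1 + i) ω} := by
    ext ω; simp [crossingSet]
  rw [hunion]
  exact .biUnion (to_countable _) fun k _ =>
    measurableSet_le measurable_const (Finset.measurable_sum _ fun i _ => hmeas i)

lemma headsProp_nonneg (hX01 : ∀ i ω, X i ω = 0 ∨ X i ω = 1) (a n k : ℕ) (ω : Ω) :
    0 ≤ headsProp X a n k ω :=
  div_nonneg (add_nonneg a.cast_nonneg (Finset.sum_nonneg fun i _ => by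
    rcases hX01 i ω with h | h <;> simp [h])) (by positivity)

lemma headsProp_le_one (hX01 : ∀ i ω, X i ω = 0 ∨ X i ω = 1) {a n : ℕ} (han : a ≤ n) (k : ℕ)
    (ω : Ω) : headsProp X a n k ω ≤ 1 := by
  have hsum : ∑ i ∈ Finset.range k, X i ω ≤ k := by
    simpa using Finset.sum_le_sum fun i (_ : i ∈ Finset.range k) => show X i ω ≤ 1 by
      rcases hX01 i ω with h | h <;> simp [h]
  exact div_le_one_of_le₀ (by linarith [(Nat.cast_le (α := ℝ)).2 han]) (by positivity)

end CoinWalk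

section FairCoin

variable {Ω : Type*} [MeasurableSpace Ω] {μ : Measure Ω} {X : ℕ → Ω → ℝ}

lemma measurable_headsProp (hX : ∀ i, Measurable (X i)) (a n k : ℕ) :
    Measurable (headsProp X a n k) :=
  (measurable_const.add (Finset.measurable_sum _ fun i _ => hX i)).div_const _

namespace IsFairCoinSeq

lemma measureReal_inter_crossingSet (hX : IsFairCoinSeq μ X) (m N : ℕ) (x b v : ℝ) :
    μ.real (X m ⁻¹' {v} ∩ crossingSet X (m + 1) N x b) =
      μ.real (X m ⁻¹' {v}) * μ.real (crossingSet X (m + 1) N x b) := by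
  have hindep := indep_iSup_of_disjoint (fun j => (hX.1 j).comap_le) hX.2.2.2.iIndep
    (S := {m}) (T := Ioi m) (by simp)
  have hhead : MeasurableSet[⨆ j ∈ ({m} : Set ℕ), MeasurableSpace.comap (X j) inferInstance]
      (X m ⁻¹' {v}) :=
    le_biSup (fun j => MeasurableSpace.comap (X j) inferInstance) (mem_singleton m) _
      ⟨{v}, measurableSet_singleton v, rfl⟩
  simp only [measureReal_def,
    (Indep_iff _ _ μ).1 hindep _ _ hhead (measurableSet_crossingSet_succ m N x b),
    ENNReal.toReal_mul]

lemma measureReal_heads (hX : IsFairCoinSeq μ X) (m : ℕ) : μ.real (X m ⁻¹' {1}) = 1 / 2 := by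
  simp [measureReal_def, preimage, hX.2.2.1 m]

variable [IsProbabilityMeasure μ]

lemma measureReal_tails (hX : IsFairCoinSeq μ X) (m : ℕ) : μ.real (X m ⁻¹' {0}) = 1 / 2 := by
  have htails : X m ⁻¹' {0} = (X m ⁻¹' {1})ᶜ := by
    ext ω; rcases hX.2.1 m ω with h | h <;> simp [h]
  rw [htails, measureReal_compl ((hX.1 m) (measurableSet_singleton 1)), hX.measureReal_heads,
    probReal_univ]
  norm_num

lemma measureReal_crossingSet_le (hX : IsFairCoinSeq μ X) {x : ℝ} (hx : 1 / 2 ≤ x) (N : ℕ) :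
    ∀ m b, μ.real (crossingSet X m N x b) ≤ exp (-(4 * x - 2) * b) := by
  induction N with
  | zero => intro m b; simp [crossingSet, exp_nonneg]
  | succ N ih =>
    intro m b
    rcases le_or_gt b 0 with hb | hb
    · exact measureReal_le_one.trans (one_le_exp (by nlinarith))
    calc μ.real (crossingSet X m (N + 1) x b)
        ≤ μ.real (X m ⁻¹' {1} ∩ crossingSet X (m + 1) N x (b + x - 1)) +
            μ.real (X m ⁻¹' {0} ∩ crossingSet X (m + 1) N x (b + x)) :=
          (measureReal_mono (crossingSet_succ_subset hX.2.1 hb)).trans (measureReal_union_le _ _)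
      _ = 1 / 2 * μ.real (crossingSet X (m + 1) N x (b + x - 1)) +
            1 / 2 * μ.real (crossingSet X (m + 1) N x (b + x)) := by
          rw [hX.measureReal_inter_crossingSet, hX.measureReal_inter_crossingSet,
            hX.measureReal_heads, hX.measureReal_tails]
      _ ≤ 1 / 2 * exp (-(4 * x - 2) * (b + x - 1)) + 1 / 2 * exp (-(4 * x - 2) * (b + x)) := by
          gcongr <;> apply ih
      _ ≤ exp (-(4 * x - 2) * b) := by linarith [exp_add_exp_le_two_mul_exp x b]

lemma measureReal_exists_le_sum_le (hX : IsFairCoinSeq μ X) {x : ℝ} (hx : 1 / 2 ≤ x) (b : ℝ) :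
    μ.real {ω | ∃ k : ℕ, x * k + b ≤ ∑ i ∈ Finset.range k, X i ω} ≤ exp (-(4 * x - 2) * b) := by
  have hunion : {ω | ∃ k : ℕ, x * k + b ≤ ∑ i ∈ Finset.range k, X i ω} =
      ⋃ N, crossingSet X 0 N x b := by
    ext ω
    simp only [crossingSet, zero_add, mem_iUnion]
    exact ⟨fun ⟨k, hk⟩ => ⟨k + 1, k, k.lt_succ_self, hk⟩, fun ⟨_, k, _, hk⟩ => ⟨k, hk⟩⟩
  rw [hunion, measureReal_def, (crossingSet_mono 0 x b).measure_iUnion]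
  refine ENNReal.toReal_le_of_le_ofReal (exp_pos _).le (iSup_le fun N => ?_)
  exact (ENNReal.le_ofReal_iff_toReal_le (measure_ne_top _ _) (exp_pos _).le).2
    (hX.measureReal_crossingSet_le hx N 0 b)

lemma measureReal_lt_iSup_headsProp_le (hX : IsFairCoinSeq μ X) {a n : ℕ} (hn : 0 < n)
    {x : ℝ} (hx : 1 / 2 ≤ x) :
    μ.real {ω | x < ⨆ k, headsProp X a n k ω} ≤ exp (-(4 * x - 2) * (x * n - a)) := by
  refine (measureReal_mono fun ω (hω : x < ⨆ k, headsProp X a n k ω) => ?_).trans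
    (hX.measureReal_exists_le_sum_le hx _)
  obtain ⟨k, hk⟩ := exists_lt_of_lt_ciSup hω
  rw [headsProp, lt_div_iff₀ (by positivity)] at hk
  exact ⟨k, by linarith⟩

end IsFairCoinSeq

end FairCoin

/-- `Ṽ(a,n) ≤ max(a/n, 1/2) + (1/2)·∫_{max((2a−n)/n,0)}^1 exp(−(1+t)·t·n + 2a·t) dt`. -/
theorem clairvoyant_le_add_integral_exp {Ω : Type*} [MeasurableSpace Ω] (μ : Measure Ω)
    [IsProbabilityMeasure μ] (X : ℕ → Ω → ℝ) (hX : IsFairCoinSeq μ X)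
    (a n : ℕ) (hn : 1 ≤ n) (han : a ≤ n) :
    clairvoyantValue μ X a n ≤
      max ((a : ℝ) / n) (1 / 2) +
        (1 / 2) * ∫ t in (max ((2 * (a : ℝ) - n) / n) 0)..1,
          Real.exp (-((1 + t) * t * n) + 2 * a * t) := by
  obtain ⟨hmeas, h01, -, -⟩ := id hX
  set c := max ((a : ℝ) / n) (1 / 2)
  set M := fun ω => ⨆ k, headsProp X a n k ω
  have hM : Measurable M := .iSup (measurable_headsProp hmeas a n)
  have hM_mem : ∀ ω, M ω ∈ Icc 0 1 := fun ω =>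
    ⟨iSup_nonneg (headsProp_nonneg h01 a n · ω), ciSup_le (headsProp_le_one h01 han · ω)⟩
  have hc : c ≤ 1 :=
    max_le (div_le_one_of_le₀ (by exact_mod_cast han) (by positivity)) (by norm_num)
  have htail : ∀ s ∈ Ioc 0 (1 - c), μ.real {ω | s < max (M ω - c) 0} ≤
      exp (-(4 * (c + s) - 2) * ((c + s) * n - a)) := by
    rintro s ⟨hs, -⟩
    rw [setOf_lt_max_sub_zero hs]
    exact hX.measureReal_lt_iSup_headsProp_le hn (by linarith [le_max_right ((a : ℝ) / n) (1 / 2)])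
  have hlower : 2 * c - 1 = max ((2 * (a : ℝ) - n) / n) 0 := by
    rw [mul_max_of_nonneg _ _ zero_le_two, ← max_sub_sub_right]
    congr 1
    · field_simp
    · norm_num
  calc clairvoyantValue μ X a n ≤ c + ∫ ω, max (M ω - c) 0 ∂μ :=
        integral_le_add_integral_max_sub_zero
          (.of_mem_Icc 0 1 hM.aemeasurable (ae_of_all _ hM_mem)) c
    _ ≤ c + ∫ s in Ioc 0 (1 - c), exp (-(4 * (c + s) - 2) * ((c + s) * n - a)) := by
        gcongr
        exact integral_le_setIntegral_of_measureReal_lt_le ((hM.sub_const c).max measurable_const)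
          (fun ω => le_max_right _ _) (fun ω => max_le (by linarith [(hM_mem ω).2]) (by linarith))
          (by fun_prop : Continuous _).integrableOn_Ioc htail
    _ = _ := by rw [integral_exp_threshold_eq _ _ _ hc, hlower]
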